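/- Let H be a bialgebra over a commutative ring k and let F ∈ H ⊗ H be an invertible element satisfying the normalization conditions (ε ⊗ id)(F) = 1 and (id ⊗ ε)(F) = 1 (identifying k ⊗ H and H ⊗ k with H), together with the cocycle condition F₁₂·(Δ⊗id)(F) = F₂₃·(id⊗Δ)(F) in H ⊗ H ⊗ H, where F₁₂ = F ⊗ 1 and F₂₃ = 1 ⊗ F. Then the twisted comultiplication Δ_F : H → H ⊗ H defined by Δ_F(x) := F·Δ(x)·F⁻¹ is coassociative, i.e., (Δ_F ⊗ id)(Δ_F(x)) = (id ⊗ Δ_F)(Δ_F(x)) for all x ∈ H (under the canonical associativity identification of (H⊗H)⊗H with H⊗(H⊗H)), and ε remains a counit for Δ_F, i.e., (ε ⊗ id)(Δ_F(x)) = x = (id ⊗ ε)(Δ_F(x)). Hence twisting by an admissible (Drinfel'd) twist F preserves the bialgebra axioms for the comultiplication. -/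

import Mathlib

/-!
Applying `Δ_F ⊗ id` to `y` is conjugation of `(Δ ⊗ id)(y)` by `F₁₂`, and applying `id ⊗ Δ_F` is
conjugation of `(id ⊗ Δ)(y)` by `F₂₃`. Hence both sides of twisted coassociativity are
`(Δ ⊗ id)Δ(x) = (id ⊗ Δ)Δ(x)` conjugated by `G = F₁₂·(Δ⊗id)(F) = F₂₃·(id⊗Δ)(F)`, the common value of
the cocycle condition. For the counit, the algebra maps `ε ⊗ id` and `id ⊗ ε` send `F`, hence `F⁻¹`,
to `1`, so they do not see the twist.
-/

open scoped TensorProduct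

variable (k H : Type*) [CommRing k] [Ring H] [Bialgebra k H]

/-- The algebra homomorphism `φ₁₂ : H ⊗ H → H ⊗ H ⊗ H`, `a ⊗ b ↦ a ⊗ b ⊗ 1`
(so `F₁₂ = φ₁₂(F)` is `F ⊗ 1` under the canonical associativity identification). -/
noncomputable def phi12 : H ⊗[k] H →ₐ[k] H ⊗[k] (H ⊗[k] H) :=
  Algebra.TensorProduct.map (AlgHom.id k H) Algebra.TensorProduct.includeLeft

/-- The algebra homomorphism `φ₂₃ : H ⊗ H → H ⊗ H ⊗ H`, `a ⊗ b ↦ 1 ⊗ a ⊗ b`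
(so `F₂₃ = φ₂₃(F) = 1 ⊗ F`). -/
noncomputable def phi23 : H ⊗[k] H →ₐ[k] H ⊗[k] (H ⊗[k] H) :=
  Algebra.TensorProduct.includeRight

/-- The algebra homomorphism `Δ ⊗ id : H ⊗ H → H ⊗ H ⊗ H` (composed with the canonical
associativity identification). -/
noncomputable def comulTensorId : H ⊗[k] H →ₐ[k] H ⊗[k] (H ⊗[k] H) :=
  (Algebra.TensorProduct.assoc k k k H H H).toAlgHom.comp
    (Algebra.TensorProduct.map (Bialgebra.comulAlgHom k H) (AlgHom.id k H))

/-- The algebra homomorphism `id ⊗ Δ : H ⊗ H → H ⊗ H ⊗ H`. -/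
noncomputable def idTensorComul : H ⊗[k] H →ₐ[k] H ⊗[k] (H ⊗[k] H) :=
  Algebra.TensorProduct.map (AlgHom.id k H) (Bialgebra.comulAlgHom k H)

/-- The map `ε ⊗ id : H ⊗ H → H` (using the canonical identification `k ⊗ H ≅ H`). -/
noncomputable def counitTensorId : H ⊗[k] H →ₐ[k] H :=
  (Algebra.TensorProduct.lid k H).toAlgHom.comp
    (Algebra.TensorProduct.map (Bialgebra.counitAlgHom k H) (AlgHom.id k H))

/-- The map `id ⊗ ε : H ⊗ H → H` (using the canonical identification `H ⊗ k ≅ H`). -/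
noncomputable def idTensorCounit : H ⊗[k] H →ₐ[k] H :=
  (Algebra.TensorProduct.rid k k H).toAlgHom.comp
    (Algebra.TensorProduct.map (AlgHom.id k H) (Bialgebra.counitAlgHom k H))

/-- The twisted comultiplication `Δ_F(x) = F·Δ(x)·F⁻¹`, as a `k`-linear map, where
`Finv` is the (two-sided) inverse of the twist `F`. -/
noncomputable def twistedComul (F Finv : H ⊗[k] H) : H →ₗ[k] H ⊗[k] H :=
  (LinearMap.mulLeft k F) ∘ₗ (LinearMap.mulRight k Finv) ∘ₗ
    (Bialgebra.comulAlgHom k H).toLinearMap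

lemma twistedComul_apply (F Finv : H ⊗[k] H) (x : H) :
    twistedComul k H F Finv x = F * Coalgebra.comul x * Finv := by
  simp [twistedComul, mul_assoc]

lemma commute_phi12_one_tmul_one_tmul (z : H ⊗[k] H) (b : H) :
    Commute (phi12 k H z) ((1 : H) ⊗ₜ[k] ((1 : H) ⊗ₜ[k] b)) := by
  induction z using TensorProduct.induction_on with
  | zero => simp
  | tmul x y => simp [Commute, SemiconjBy, phi12, Algebra.TensorProduct.tmul_mul_tmul]
  | add u v hu hv => simpa only [map_add] using hu.add_left hv

lemma assoc_tmul_eq_phi12_mul (u : H ⊗[k] H) (b : H) :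
    TensorProduct.assoc k H H H (u ⊗ₜ[k] b) =
      phi12 k H u * ((1 : H) ⊗ₜ[k] ((1 : H) ⊗ₜ[k] b)) := by
  induction u using TensorProduct.induction_on with
  | zero => simp
  | tmul x y => simp [phi12, Algebra.TensorProduct.tmul_mul_tmul]
  | add u v hu hv => simp [TensorProduct.add_tmul, add_mul, hu, hv]

lemma assoc_map_twistedComul_id (F Finv y : H ⊗[k] H) :
    TensorProduct.assoc k H H H (TensorProduct.map (twistedComul k H F Finv) LinearMap.id y) =
      phi12 k H F * comulTensorId k H y * phi12 k H Finv := by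
  induction y using TensorProduct.induction_on with
  | zero => simp
  | tmul a b =>
    have hcomul : comulTensorId k H (a ⊗ₜ[k] b) =
        TensorProduct.assoc k H H H (Coalgebra.comul a ⊗ₜ[k] b) := rfl
    rw [TensorProduct.map_tmul, LinearMap.id_apply, twistedComul_apply, hcomul,
      assoc_tmul_eq_phi12_mul, assoc_tmul_eq_phi12_mul, map_mul, map_mul]
    simp only [mul_assoc, (commute_phi12_one_tmul_one_tmul k H Finv b).eq]
  | add u v hu hv => simp [add_mul, mul_add, hu, hv]

lemma map_id_twistedComul (F Finv y : H ⊗[k] H) :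
    TensorProduct.map LinearMap.id (twistedComul k H F Finv) y =
      phi23 k H F * idTensorComul k H y * phi23 k H Finv := by
  induction y using TensorProduct.induction_on with
  | zero => simp
  | tmul a b =>
    simp [twistedComul_apply, phi23, idTensorComul, Algebra.TensorProduct.tmul_mul_tmul]
  | add u v hu hv => simp [add_mul, mul_add, hu, hv]

lemma comulTensorId_comul (x : H) :
    comulTensorId k H (Coalgebra.comul x) = idTensorComul k H (Coalgebra.comul x) :=
  Coalgebra.coassoc_apply x

lemma counitTensorId_comul (x : H) : counitTensorId k H (Coalgebra.comul x) = x := by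
  change TensorProduct.lid k H (Coalgebra.counit.rTensor H (Coalgebra.comul x)) = x
  rw [Coalgebra.rTensor_counit_comul, TensorProduct.lid_tmul, one_smul]

lemma idTensorCounit_comul (x : H) : idTensorCounit k H (Coalgebra.comul x) = x := by
  change TensorProduct.rid k H (Coalgebra.counit.lTensor H (Coalgebra.comul x)) = x
  rw [Coalgebra.lTensor_counit_comul, TensorProduct.rid_tmul, one_smul]

-- The left side is a left inverse and the right side a right inverse of `F₁₂·(Δ⊗id)(F)`.
lemma comulTensorId_mul_phi12_inv_eq (F Finv : H ⊗[k] H) (hF1 : F * Finv = 1)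
    (hF2 : Finv * F = 1)
    (hcocycle : phi12 k H F * comulTensorId k H F = phi23 k H F * idTensorComul k H F) :
    comulTensorId k H Finv * phi12 k H Finv = idTensorComul k H Finv * phi23 k H Finv := by
  refine left_inv_eq_right_inv (a := phi12 k H F * comulTensorId k H F) ?_ ?_
  · rw [mul_assoc, ← mul_assoc (phi12 k H Finv), ← map_mul, hF2, map_one, one_mul, ← map_mul,
      hF2, map_one]
  · rw [hcocycle, mul_assoc, ← mul_assoc (idTensorComul k H F), ← map_mul, hF1, map_one,
      one_mul, ← map_mul, hF1, map_one]

lemma map_mul_mul_eq_of_map_eq_one {A B Φ : Type*} [Monoid A] [Monoid B] [FunLike Φ A B]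
    [MonoidHomClass Φ A B] (φ : Φ) {F Finv : A} (hF : F * Finv = 1) (hφF : φ F = 1) (y : A) :
    φ (F * y * Finv) = φ y := by
  have hφFinv : φ Finv = 1 := by simpa [hφF] using congrArg φ hF
  rw [map_mul, map_mul, hφF, hφFinv, one_mul, mul_one]

/-- **Drinfel'd twisting preserves the bialgebra comultiplication axioms.**
If `F ∈ H ⊗ H` is invertible with inverse `Finv`, is normalized, i.e.
`(ε ⊗ id)(F) = 1` and `(id ⊗ ε)(F) = 1`, and satisfies the cocycle condition
`F₁₂·(Δ⊗id)(F) = F₂₃·(id⊗Δ)(F)`, then the twisted comultiplication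
`Δ_F(x) = F·Δ(x)·F⁻¹` is coassociative (under the canonical associativity
identification) and `ε` remains a counit for `Δ_F`. -/
theorem twisted_comul_coassoc_counit (F Finv : H ⊗[k] H)
    (hF1 : F * Finv = 1) (hF2 : Finv * F = 1)
    (hnorm1 : counitTensorId k H F = 1) (hnorm2 : idTensorCounit k H F = 1)
    (hcocycle : phi12 k H F * comulTensorId k H F = phi23 k H F * idTensorComul k H F) :
    (∀ x : H,
      (TensorProduct.assoc k H H H)
        ((TensorProduct.map (twistedComul k H F Finv) LinearMap.id)
          (twistedComul k H F Finv x)) =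
      (TensorProduct.map LinearMap.id (twistedComul k H F Finv))
        (twistedComul k H F Finv x)) ∧
    (∀ x : H, counitTensorId k H (twistedComul k H F Finv x) = x) ∧
    (∀ x : H, idTensorCounit k H (twistedComul k H F Finv x) = x) := by
  have hinv := comulTensorId_mul_phi12_inv_eq k H F Finv hF1 hF2 hcocycle
  refine ⟨fun x => ?_, fun x => ?_, fun x => ?_⟩
  · rw [assoc_map_twistedComul_id, map_id_twistedComul, twistedComul_apply, map_mul, map_mul,
      map_mul, map_mul, comulTensorId_comul]
    calc phi12 k H F * (comulTensorId k H F * idTensorComul k H (Coalgebra.comul x) *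
            comulTensorId k H Finv) * phi12 k H Finv
        = phi12 k H F * comulTensorId k H F * idTensorComul k H (Coalgebra.comul x) *
            (comulTensorId k H Finv * phi12 k H Finv) := by simp only [mul_assoc]
      _ = phi23 k H F * (idTensorComul k H F * idTensorComul k H (Coalgebra.comul x) *
            idTensorComul k H Finv) * phi23 k H Finv := by
          rw [hcocycle, hinv]; simp only [mul_assoc]
  · rw [twistedComul_apply, map_mul_mul_eq_of_map_eq_one _ hF1 hnorm1, counitTensorId_comul]
  · rw [twistedComul_apply, map_mul_mul_eq_of_map_eq_one _ hF1 hnorm2, idTensorCounit_comul]
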